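/- Assume φ is a soliton family with constants ω₀, C, and define q(ω) := (1/2)‖φ_ω‖²_{l²}. Then q'(ω) = ⟨∂_ωφ_ω, φ_ω⟩ = Ω(∂_ωφ[θ,ω], ∂_θφ[θ,ω]) for every θ, and there exist ω₁ ≥ ω₀ and constants 0 < c ≤ K such that c·ω^{-2/3} ≤ q'(ω) ≤ K·ω^{-2/3} for all ω > ω₁; in particular q'(ω) > 0 for ω > ω₁. -/

import Mathlib

noncomputable section

open scoped BigOperators ENNReal
open MeasureTheory Complex Filter

/-! ## Sequence spaces and norms -/

/-- Square-summable complex sequences `ℓ²(ℤ;ℂ)`. -/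
abbrev L2 := lp (fun _ : ℤ => ℂ) 2
/-- Square-summable real sequences `ℓ²(ℤ;ℝ)`. -/
abbrev L2R := lp (fun _ : ℤ => ℝ) 2
/-- Bounded real sequences `ℓ^∞(ℕ₀;ℝ)`. -/
abbrev LinfN := lp (fun _ : ℕ => ℝ) ⊤

/-- Discrete Laplacian on raw complex sequences. -/
def lapC (u : ℤ → ℂ) : ℤ → ℂ := fun x => u (x + 1) - 2 * u x + u (x - 1)

/-- Discrete Laplacian on raw real sequences. -/
def lapR (u : ℤ → ℝ) : ℤ → ℝ := fun x => u (x + 1) - 2 * u x + u (x - 1)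

/-- Exponential weight `e^{a|x|}`. -/
def wt (a : ℝ) (x : ℤ) : ℝ := Real.exp (a * |(x : ℝ)|)

/-- `ℝ≥0∞`-valued weighted `ℓ²` norm `‖u‖_{l²_a} = ‖e^{a|·|}u‖_{l²}`. -/
def el2w (a : ℝ) (u : ℤ → ℂ) : ℝ≥0∞ :=
  (∑' x : ℤ, ((‖u x‖₊ : ℝ≥0∞) * ENNReal.ofReal (wt a x)) ^ (2 : ℕ)) ^ ((1 : ℝ) / 2)

/-- `ℝ≥0∞`-valued `ℓ²` norm. -/
def el2 (u : ℤ → ℂ) : ℝ≥0∞ := el2w 0 u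

/-- `ℝ≥0∞`-valued `ℓ¹` norm. -/
def el1 (u : ℤ → ℂ) : ℝ≥0∞ := ∑' x : ℤ, (‖u x‖₊ : ℝ≥0∞)

/-- `ℝ≥0∞`-valued `ℓ^∞` norm. -/
def elinf (u : ℤ → ℂ) : ℝ≥0∞ := ⨆ x : ℤ, (‖u x‖₊ : ℝ≥0∞)

/-- `L^q` norm in time over the set `I` of an `ℝ≥0∞`-valued function. -/
def LqT (q : ℝ) (I : Set ℝ) (F : ℝ → ℝ≥0∞) : ℝ≥0∞ := (∫⁻ t in I, F t ^ q) ^ (1 / q)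

/-- `L^∞` norm in time over the set `I` of an `ℝ≥0∞`-valued function. -/
def LinfT (I : Set ℝ) (F : ℝ → ℝ≥0∞) : ℝ≥0∞ := essSup F (volume.restrict I)

/-- The `Strichartz` norm `L^∞(I,l²) ∩ L⁶(I,l^∞)` of a time-dependent sequence. -/
def StzT (I : Set ℝ) (F : ℝ → ℤ → ℂ) : ℝ≥0∞ :=
  LinfT I (fun t => el2 (F t)) + LqT 6 I (fun t => elinf (F t))

/-- The `L¹ ∩ L^∞` norm in time of a scalar function. -/
def L1LinfT (I : Set ℝ) (g : ℝ → ℝ) : ℝ≥0∞ :=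
  LqT 1 I (fun t => (‖g t‖₊ : ℝ≥0∞)) + LinfT I (fun t => (‖g t‖₊ : ℝ≥0∞))

/-! ## The discrete Laplacian and its unitary group -/

lemma memℓp_translate (k : ℤ) (u : L2) : Memℓp (fun x : ℤ => u (x + k)) 2 := by
  apply memℓp_gen
  have hs : Summable fun x : ℤ => ‖u x‖ ^ (2 : ℝ≥0∞).toReal :=
    (memℓp_gen_iff (by norm_num)).1 (lp.memℓp u)
  exact ((Equiv.addRight k).summable_iff
    (f := fun x : ℤ => ‖u x‖ ^ (2 : ℝ≥0∞).toReal)).2 hs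

lemma norm_translate (k : ℤ) (u : L2) :
    ‖(⟨fun x : ℤ => u (x + k), memℓp_translate k u⟩ : L2)‖ = ‖u‖ := by
  rw [lp.norm_eq_tsum_rpow (by norm_num), lp.norm_eq_tsum_rpow (by norm_num)]
  congr 1
  exact (Equiv.addRight k).tsum_eq (f := fun x : ℤ => ‖u x‖ ^ (2 : ℝ≥0∞).toReal)

/-- Translation `u ↦ u(· + k)` as a linear map on `ℓ²(ℤ;ℂ)`. -/
def translateLM (k : ℤ) : L2 →ₗ[ℂ] L2 where
  toFun u := ⟨fun x => u (x + k), memℓp_translate k u⟩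
  map_add' u v := by ext x; simp [lp.coeFn_add]; rfl
  map_smul' c u := by ext x; simp [lp.coeFn_smul]

/-- Translation as a continuous linear map on `ℓ²(ℤ;ℂ)`. -/
def translateCLM (k : ℤ) : L2 →L[ℂ] L2 :=
  LinearMap.mkContinuous (translateLM k) 1 (by
    intro u; rw [one_mul]; exact le_of_eq (norm_translate k u))

/-- The discrete Laplacian `(Δ_d u)(x) = u(x+1) - 2u(x) + u(x-1)` as a bounded operator
on `ℓ²(ℤ;ℂ)`. -/
def DeltaD : L2 →L[ℂ] L2 :=
  translateCLM 1 + translateCLM (-1) - 2 • ContinuousLinearMap.id ℂ L2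

lemma DeltaD_apply (u : L2) (x : ℤ) :
    DeltaD u x = u (x + 1) - 2 * u x + u (x - 1) := by
  simp [DeltaD, translateCLM, translateLM, LinearMap.mkContinuous,
    lp.coeFn_add, lp.coeFn_sub, lp.coeFn_smul, sub_eq_add_neg]
  change u (x + 1) + u (x + -1) + -(2 * u x) = u (x + 1) + -(2 * u x) + u (x + -1)
  ring_nf

/-- The Kronecker delta at `0` as an element of `ℓ²(ℤ;ℂ)`. -/
def e0C : L2 := lp.single 2 (0 : ℤ) (1 : ℂ)

lemma norm_e0C : ‖e0C‖ = 1 := by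
  have := lp.norm_single (p := 2) (E := fun _ : ℤ => ℂ) (by norm_num)
    0 (1 : ℂ)
  simpa [e0C] using this

/-- The projection `P₀⊥ u = u - (u,δ₀)δ₀` as a bounded operator on `ℓ²(ℤ;ℂ)`. -/
def P0perp : L2 →L[ℂ] L2 :=
  LinearMap.mkContinuous
    { toFun := fun u => u - (u 0) • e0C
      map_add' := fun u v => by
        have h : (↑(u + v) : ∀ _ : ℤ, ℂ) 0 = u 0 + v 0 := by
          rw [lp.coeFn_add]; rfl
        show (u + v) - ((u + v : L2) 0) • e0C = (u - (u 0) • e0C) + (v - (v 0) • e0C)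
        rw [h, add_smul]; abel
      map_smul' := fun c u => by
        have h : (↑(c • u) : ∀ _ : ℤ, ℂ) 0 = c * u 0 := by
          rw [lp.coeFn_smul]; rfl
        show (c • u) - ((c • u : L2) 0) • e0C = (RingHom.id ℂ) c • (u - (u 0) • e0C)
        rw [h, RingHom.id_apply, mul_smul, ← smul_sub] }
    2 (by
      intro u
      have h2 : ‖u 0‖ ≤ ‖u‖ := lp.norm_apply_le_norm (by norm_num) u 0
      calc ‖u - (u 0) • e0C‖ ≤ ‖u‖ + ‖(u 0) • e0C‖ := norm_sub_le _ _
        _ = ‖u‖ + ‖u 0‖ * ‖e0C‖ := by rw [norm_smul]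
        _ ≤ 2 * ‖u‖ := by rw [norm_e0C]; linarith)

lemma P0perp_apply (u : L2) (x : ℤ) :
    P0perp u x = if x = 0 then 0 else u x := by
  have h : P0perp u = u - (u 0) • e0C := rfl
  rw [h, lp.coeFn_sub, lp.coeFn_smul]
  by_cases hx : x = 0 <;>
    simp [hx, e0C, lp.single_apply, Pi.sub_apply, Pi.smul_apply]

/-- `Δ₀ = P₀⊥ Δ_d P₀⊥`, the discrete Laplacian restricted to `P₀⊥ ℓ²`. -/
def Delta0 : L2 →L[ℂ] L2 := P0perp.comp (DeltaD.comp P0perp)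

/-- The unitary group `e^{itΔ_d}`. -/
def Ud (t : ℝ) : L2 →L[ℂ] L2 := NormedSpace.exp ((Complex.I * t) • DeltaD)

/-- The unitary group `e^{itΔ₀}`. -/
def U0 (t : ℝ) : L2 →L[ℂ] L2 := NormedSpace.exp ((Complex.I * t) • Delta0)

/-- Domination criterion for membership in `ℓ²`. -/
lemma memℓp_of_le (u : L2) (f : ℤ → ℂ) (h : ∀ x, ‖f x‖ ≤ ‖u x‖) : Memℓp f 2 := by
  apply memℓp_gen
  have hs : Summable fun x : ℤ => ‖u x‖ ^ (2 : ℝ≥0∞).toReal :=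
    (memℓp_gen_iff (by norm_num)).1 (lp.memℓp u)
  refine hs.of_nonneg_of_le (fun x => ?_) (fun x => ?_)
  · positivity
  · exact Real.rpow_le_rpow (norm_nonneg _) (h x) (by norm_num)

/-- The restriction `P₊` to `{x ≥ 1}`. -/
def Pplus (u : L2) : L2 :=
  ⟨fun x => if 1 ≤ x then u x else 0,
    memℓp_of_le u _ (fun x => by by_cases h : 1 ≤ x <;> simp [h])⟩

/-- The restriction `P₋` to `{x ≤ -1}`. -/
def Pminus (u : L2) : L2 :=
  ⟨fun x => if x ≤ -1 then u x else 0,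
    memℓp_of_le u _ (fun x => by by_cases h : x ≤ -1 <;> simp [h])⟩

/-- Duhamel term `∫₀ᵗ e^{i(t-s)Δ₀} P₀⊥ f(s) ds`. -/
def duhamel (f : ℝ → L2) (t : ℝ) : L2 := ∫ s in (0 : ℝ)..t, U0 (t - s) (P0perp (f s))

/-! ## Soliton families -/

/-- The Kronecker delta at `0` in `ℓ²(ℤ;ℝ)`. -/
def e0R : L2R := lp.single 2 (0 : ℤ) (1 : ℝ)

/-- `P₀⊥` on real `ℓ²`. -/
def P0R (u : L2R) : L2R := u - (u 0) • e0R

/-- A family of solitons `φ_ω`, `ω ∈ (ω₀,∞)`, as in Proposition 1.2 of the paper.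
The data is recorded through the weighted sequences `Φ ω = e^{10|·|} φ_ω ∈ ℓ²(ℤ;ℝ)`
(so that `φ_ω = e^{-10|·|} Φ ω`, the map `ω ↦ φ_ω` is twice continuously differentiable
into `l²_{10}` iff `ω ↦ Φ ω` is so into `ℓ²`, and `l²_{10}`-norm statements about `φ_ω`
are plain `ℓ²`-norm statements about `Φ ω`), together with its first and second
derivatives in `ω`.  The fields state: `ω ↦ φ_ω` is `C²` from `(ω₀,∞)` to `l²_{10}`;
`φ_ω` solves `0 = -Δ_d φ_ω + ω φ_ω - |φ_ω|⁶ φ_ω`; and the two weighted estimates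
`∑_{j=0}^{2} ω^j ‖∂_ω^j φ_ω - ∂_ω^j(ω^{1/6} δ₀)‖_{l²_{10}} ≤ C ω^{-5/6}` and
`∑_{j=0}^{2} ω^j ‖P₀⊥ ∂_ω^j φ_ω‖_{l²_{10}} ≤ C ω^{-5/6}` hold (note
`∂_ω(ω^{1/6}δ₀) = (1/6)ω^{-5/6}δ₀` and `∂_ω²(ω^{1/6}δ₀) = -(5/36)ω^{-11/6}δ₀`). -/
structure SolitonFamily (ω₀ C : ℝ) : Type where
  Φ : ℝ → L2R
  Φ' : ℝ → L2R
  Φ'' : ℝ → L2R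
  hasDeriv1 : ∀ ω ∈ Set.Ioi ω₀, HasDerivAt Φ (Φ' ω) ω
  hasDeriv2 : ∀ ω ∈ Set.Ioi ω₀, HasDerivAt Φ' (Φ'' ω) ω
  contDeriv2 : ContinuousOn Φ'' (Set.Ioi ω₀)
  eqn : ∀ ω ∈ Set.Ioi ω₀, ∀ x : ℤ,
    0 = -(lapR (fun y => wt (-10) y * Φ ω y) x) + ω * (wt (-10) x * Φ ω x)
        - |wt (-10) x * Φ ω x| ^ 6 * (wt (-10) x * Φ ω x)
  approx : ∀ ω ∈ Set.Ioi ω₀,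
      ‖Φ ω - (ω ^ ((1 : ℝ) / 6)) • e0R‖
    + ω * ‖Φ' ω - ((1 / 6 : ℝ) * ω ^ (-(5 : ℝ) / 6)) • e0R‖
    + ω ^ 2 * ‖Φ'' ω - ((-5 / 36 : ℝ) * ω ^ (-(11 : ℝ) / 6)) • e0R‖
      ≤ C * ω ^ (-(5 : ℝ) / 6)
  perp : ∀ ω ∈ Set.Ioi ω₀,
      ‖P0R (Φ ω)‖ + ω * ‖P0R (Φ' ω)‖ + ω ^ 2 * ‖P0R (Φ'' ω)‖ ≤ C * ω ^ (-(5 : ℝ) / 6)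

namespace SolitonFamily
variable {ω₀ C : ℝ} (sf : SolitonFamily ω₀ C)

/-- The soliton `φ_ω` as a raw real sequence. -/
def phiF (ω : ℝ) : ℤ → ℝ := fun x => wt (-10) x * sf.Φ ω x
/-- `∂_ω φ_ω` as a raw real sequence. -/
def dphiF (ω : ℝ) : ℤ → ℝ := fun x => wt (-10) x * sf.Φ' ω x
/-- `∂²_ω φ_ω` as a raw real sequence. -/
def d2phiF (ω : ℝ) : ℤ → ℝ := fun x => wt (-10) x * sf.Φ'' ω x
/-- `φ[θ,ω] = e^{iθ} φ_ω`. -/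
def phiC (θ ω : ℝ) : ℤ → ℂ := fun x => Complex.exp (Complex.I * θ) * (sf.phiF ω x : ℂ)
/-- `∂_θ φ[θ,ω] = i e^{iθ} φ_ω`. -/
def dthphiC (θ ω : ℝ) : ℤ → ℂ :=
  fun x => Complex.I * Complex.exp (Complex.I * θ) * (sf.phiF ω x : ℂ)
/-- `∂_ω φ[θ,ω] = e^{iθ} ∂_ω φ_ω`. -/
def dOmphiC (θ ω : ℝ) : ℤ → ℂ := fun x => Complex.exp (Complex.I * θ) * (sf.dphiF ω x : ℂ)

end SolitonFamily

/-- The real inner product `⟨u,v⟩ = Re ∑_x u(x) conj(v(x))`. -/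
def rip (u v : ℤ → ℂ) : ℝ := ∑' x : ℤ, (u x * (starRingEnd ℂ) (v x)).re

/-- The symplectic form `Ω(u,v) = ⟨iu, v⟩`. -/
def Om (u v : ℤ → ℂ) : ℝ := rip (fun x => Complex.I * u x) v

namespace SolitonFamily
variable {ω₀ C : ℝ} (sf : SolitonFamily ω₀ C)

/-- `H_c[θ,ω] = {u ∈ ℓ² : Ω(u, ∂_θφ[θ,ω]) = Ω(u, ∂_ωφ[θ,ω]) = 0}`. -/
def Hc (θ ω : ℝ) : Set L2 :=
  {v : L2 | Om (fun x => v x) (sf.dthphiC θ ω) = 0 ∧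
            Om (fun x => v x) (sf.dOmphiC θ ω) = 0}

/-- The tube `T_{ω*}(r) = {u : inf_θ ‖u - φ[θ,ω*]‖_{l²} < r}` around the soliton orbit. -/
def Tset (ωs r : ℝ) : Set L2 :=
  {u : L2 | (⨅ θ : ℝ, el2 (fun x => u x - sf.phiC θ ωs x)) < ENNReal.ofReal r}

end SolitonFamily

/-- `u` is a `C¹` solution of DNLS `i ∂_t u = -Δ_d u - |u|⁶ u` on the time set `S`,
with derivative `u'`. -/
def IsDNLS (u u' : ℝ → L2) (S : Set ℝ) : Prop :=
  ContinuousOn u' S ∧ ∀ t ∈ S, HasDerivWithinAt u (u' t) S t ∧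
    ∀ x : ℤ, Complex.I * (u' t) x
      = -(lapC (fun y => (u t) y) x) - (‖(u t) x‖ : ℂ) ^ 6 * (u t) x

/-- The modulation remainder `ξ(t) = u(t) - φ[θ(t),ω(t)]` as a raw sequence. -/
def xiF {ω₀ C : ℝ} (sf : SolitonFamily ω₀ C) (u : ℝ → L2) (θ ω : ℝ → ℝ) (t : ℝ) :
    ℤ → ℂ := fun x => u t x - sf.phiC (θ t) (ω t) x

/-- `η(t) = P₀⊥ ξ(t)` as a raw sequence. -/
def etaF {ω₀ C : ℝ} (sf : SolitonFamily ω₀ C) (u : ℝ → L2) (θ ω : ℝ → ℝ) (t : ℝ) :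
    ℤ → ℂ := fun x => if x = 0 then 0 else xiF sf u θ ω t x

/-- The scalar coefficient appearing in the inverse `Q[θ,ω]` of `P₀⊥|_{H_c[θ,ω]}`. -/
def Qcoef {ω₀ C : ℝ} (sf : SolitonFamily ω₀ C) (θ ω : ℝ) (u : L2) : ℂ :=
  Complex.exp (Complex.I * θ) *
    (((-(sf.phiF ω 0)⁻¹ * Om (fun x => u x) (sf.dthphiC θ ω) : ℝ) : ℂ)
      + Complex.I * (((sf.dphiF ω 0)⁻¹ * Om (fun x => u x) (sf.dOmphiC θ ω) : ℝ) : ℂ))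

/-- The map `Q[θ,ω] u = u + e^{iθ}(-φ_ω(0)⁻¹ Ω(u,∂_θφ) + i (∂_ωφ_ω(0))⁻¹ Ω(u,∂_ωφ)) δ₀`. -/
def Qmap {ω₀ C : ℝ} (sf : SolitonFamily ω₀ C) (θ ω : ℝ) (u : L2) : L2 :=
  u + lp.single 2 (0 : ℤ) (Qcoef sf θ ω u)

/-- The (ℝ-linear) linearized operator
`H[θ,ω]u = -Δ_d u - 4|φ[θ,ω]|⁶ u - 3|φ[θ,ω]|⁴ φ[θ,ω]² conj(u)`. -/
def Hop {ω₀ C : ℝ} (sf : SolitonFamily ω₀ C) (θ ω : ℝ) (u : ℤ → ℂ) : ℤ → ℂ :=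
  fun x => -(lapC u x) - 4 * (‖sf.phiC θ ω x‖ : ℂ) ^ 6 * u x
    - 3 * (‖sf.phiC θ ω x‖ : ℂ) ^ 4 * (sf.phiC θ ω x) ^ 2 * (starRingEnd ℂ) (u x)

/-- The soliton of the appendix (anti-continuous limit) construction:
`φ_ω = ω^{1/6}((1 + ω⁻¹ψ₀(ω⁻¹))δ₀ + ∑_{j≥1} ω^{-j} ψ_j(ω⁻¹)(δ_j + δ_{-j}))`. -/
def phiOf (ψ : ℝ → LinfN) (ω : ℝ) : ℤ → ℝ :=
  fun x => ω ^ ((1 : ℝ) / 6) *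
    (if x = 0 then 1 + ω⁻¹ * ψ ω⁻¹ 0
     else ω ^ (-(x.natAbs : ℝ)) * ψ ω⁻¹ x.natAbs)

/-! Write `φ_ω = ω^{1/6} δ₀ + a` and `∂_ω φ_ω = (1/6) ω^{-5/6} δ₀ + a'`, where the soliton
estimates give `‖a‖ ≤ C ω^{-5/6}` and `‖a'‖ ≤ C ω^{-11/6}`. Expanding
`⟨∂_ω φ_ω, φ_ω⟩` around the product of the two `δ₀`-components leaves `(1/6) ω^{-2/3}` plus
an error of order `ω^{-5/3}`, which is below `(1/12) ω^{-2/3}` for large `ω`. The identity with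
`Ω` holds term by term because `|i e^{iθ}| = 1`. -/

open scoped RealInnerProductSpace

namespace lp

variable {α 𝕜 : Type*} [NormedField 𝕜] {p : ℝ≥0∞}

theorem norm_mul_apply_le {w : α → 𝕜} (hw : ∀ i, ‖w i‖ ≤ 1) (u : lp (fun _ : α => 𝕜) p)
    (i : α) : ‖w i * u i‖ ≤ ‖u i‖ := by
  rw [norm_mul]; exact mul_le_of_le_one_left (norm_nonneg _) (hw i)

variable [Fact (1 ≤ p)]

def mulOfNormLeOne (w : α → 𝕜) (hw : ∀ i, ‖w i‖ ≤ 1) :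
    lp (fun _ : α => 𝕜) p →L[𝕜] lp (fun _ : α => 𝕜) p :=
  LinearMap.mkContinuous
    { toFun u := ⟨fun i => w i * u i, (lp.memℓp u).mono' (norm_mul_apply_le hw u)⟩
      map_add' u v := by ext i; exact mul_add (w i) (u i) (v i)
      map_smul' c u := by ext i; exact mul_left_comm (w i) c (u i) }
    1 fun u => by
      rw [one_mul]
      exact lp.norm_mono (zero_lt_one.trans_le Fact.out).ne' (norm_mul_apply_le hw u)

variable (w : α → 𝕜) (hw : ∀ i, ‖w i‖ ≤ 1)

@[simp]
theorem mulOfNormLeOne_apply (u : lp (fun _ : α => 𝕜) p) (i : α) :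
    mulOfNormLeOne w hw u i = w i * u i := rfl

theorem norm_mulOfNormLeOne_le (u : lp (fun _ : α => 𝕜) p) :
    ‖mulOfNormLeOne w hw u‖ ≤ ‖u‖ :=
  lp.norm_mono (zero_lt_one.trans_le Fact.out).ne' (norm_mul_apply_le hw u)

theorem mulOfNormLeOne_single [DecidableEq α] (i : α) (hi : w i = 1) (c : 𝕜) :
    mulOfNormLeOne w hw (lp.single p i c) = lp.single p i c := by
  ext j
  rcases eq_or_ne j i with rfl | hj
  · simp [hi]
  · simp [hj]

end lp

theorem abs_inner_smul_add_smul_add_sub_le {E : Type*} [NormedAddCommGroup E]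
    [InnerProductSpace ℝ E] {e : E} (he : ‖e‖ = 1) (α β : ℝ) (a b : E) :
    |⟪α • e + a, β • e + b⟫ - α * β| ≤ |α| * ‖b‖ + |β| * ‖a‖ + ‖a‖ * ‖b‖ := by
  have hexp : ⟪α • e + a, β • e + b⟫ - α * β = α * ⟪e, b⟫ + β * ⟪a, e⟫ + ⟪a, b⟫ := by
    simp only [inner_add_left, inner_add_right, real_inner_smul_left, real_inner_smul_right,
      real_inner_self_eq_norm_sq, he]
    ring
  rw [hexp]
  have hb : |⟪e, b⟫| ≤ ‖b‖ := by simpa [he] using abs_real_inner_le_norm e b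
  have ha : |⟪a, e⟫| ≤ ‖a‖ := by simpa [he] using abs_real_inner_le_norm a e
  calc |α * ⟪e, b⟫ + β * ⟪a, e⟫ + ⟪a, b⟫|
      ≤ |α| * |⟪e, b⟫| + |β| * |⟪a, e⟫| + |⟪a, b⟫| := by
        rw [← abs_mul, ← abs_mul]; exact abs_add_three _ _ _
    _ ≤ |α| * ‖b‖ + |β| * ‖a‖ + ‖a‖ * ‖b‖ := by
        gcongr; exact abs_real_inner_le_norm a b

theorem re_mul_conj_I_mul_exp (θ d p : ℝ) :
    (I * (exp (I * θ) * d) * (starRingEnd ℂ) (I * exp (I * θ) * p)).re = d * p := by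
  have hunit : ‖I * exp (I * θ)‖ = 1 := by rw [norm_mul, norm_I, norm_exp_I_mul_ofReal, one_mul]
  have h : I * (exp (I * θ) * d) * (starRingEnd ℂ) (I * exp (I * θ) * p)
      = (I * exp (I * θ)) * (starRingEnd ℂ) (I * exp (I * θ)) * (d * p : ℝ) := by
    simp only [map_mul, conj_ofReal]; push_cast; ring
  rw [h, mul_conj, normSq_eq_norm_sq, hunit]
  simp

theorem wt_neg_norm_le_one {a : ℝ} (ha : 0 ≤ a) (x : ℤ) : ‖wt (-a) x‖ ≤ 1 := by
  rw [wt, Real.norm_of_nonneg (Real.exp_pos _).le, Real.exp_le_one_iff]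
  nlinarith [abs_nonneg (x : ℝ)]

/-- Takes `Φ ω` to `φ_ω`. -/
def weightCLM : L2R →L[ℝ] L2R := lp.mulOfNormLeOne (wt (-10)) (wt_neg_norm_le_one (by norm_num))

theorem weightCLM_e0R : weightCLM e0R = e0R :=
  lp.mulOfNormLeOne_single _ _ 0 (by simp [wt]) 1

theorem norm_e0R : ‖e0R‖ = 1 := by
  rw [e0R, lp.norm_single (by norm_num), norm_one]

namespace SolitonFamily

variable {ω₀ C : ℝ} (sf : SolitonFamily ω₀ C)

theorem tsum_phiF_sq (ω : ℝ) : ∑' x : ℤ, sf.phiF ω x ^ 2 = ‖weightCLM (sf.Φ ω)‖ ^ 2 := by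
  rw [← real_inner_self_eq_norm_sq, lp.inner_eq_tsum]
  exact tsum_congr fun x => by simp [weightCLM, phiF, ← abs_mul, sq]

theorem tsum_dphiF_mul_phiF (ω : ℝ) :
    ∑' x : ℤ, sf.dphiF ω x * sf.phiF ω x = ⟪weightCLM (sf.Φ ω), weightCLM (sf.Φ' ω)⟫ := by
  rw [lp.inner_eq_tsum]
  simp [weightCLM, phiF, dphiF, mul_comm]

theorem hasDerivAt_half_tsum_phiF_sq {ω : ℝ} (hω : ω ∈ Set.Ioi ω₀) :
    HasDerivAt (fun w => (1 / 2 : ℝ) * ∑' x : ℤ, sf.phiF w x ^ 2)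
      (∑' x : ℤ, sf.dphiF ω x * sf.phiF ω x) ω := by
  simp only [tsum_phiF_sq, tsum_dphiF_mul_phiF]
  refine (((weightCLM.hasFDerivAt.comp_hasDerivAt ω (sf.hasDeriv1 ω hω)).norm_sq).const_mul
    (1 / 2 : ℝ)).congr_deriv ?_
  simp only [Function.comp_apply]
  ring

theorem tsum_dphiF_mul_phiF_eq_Om (θ ω : ℝ) :
    ∑' x : ℤ, sf.dphiF ω x * sf.phiF ω x = Om (sf.dOmphiC θ ω) (sf.dthphiC θ ω) :=
  tsum_congr fun _ => (re_mul_conj_I_mul_exp θ _ _).symm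

theorem abs_tsum_dphiF_mul_phiF_sub_le {ω : ℝ} (hω : ω ∈ Set.Ioi ω₀) (h1 : 1 ≤ ω) :
    |∑' x : ℤ, sf.dphiF ω x * sf.phiF ω x - ω ^ (-(2 : ℝ) / 3) / 6|
      ≤ (7 * C / 6 + C ^ 2) / ω * ω ^ (-(2 : ℝ) / 3) := by
  have hω0 : 0 < ω := zero_lt_one.trans_le h1
  have happrox := sf.approx ω hω
  set p : ℝ := ω ^ (-(5 : ℝ) / 6) with hp₀
  set α : ℝ := ω ^ ((1 : ℝ) / 6)
  set β : ℝ := (1 / 6 : ℝ) * p with hβ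
  set a : L2R := sf.Φ ω - α • e0R
  set a' : L2R := sf.Φ' ω - β • e0R
  have hα : α * p = ω ^ (-(2 : ℝ) / 3) := by
    rw [hp₀, ← Real.rpow_add hω0]; norm_num
  have hp : p * p * ω = ω ^ (-(2 : ℝ) / 3) := by
    rw [hp₀, ← Real.rpow_add hω0, ← Real.rpow_add_one hω0.ne']
    norm_num
  have hW (γ : ℝ) (u : L2R) : weightCLM (γ • e0R + u) = γ • e0R + weightCLM u := by
    rw [map_add, map_smul, weightCLM_e0R]
  have hΦ'' : 0 ≤ ω ^ 2 * ‖sf.Φ'' ω - ((-5 / 36 : ℝ) * ω ^ (-(11 : ℝ) / 6)) • e0R‖ := by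
    positivity
  have hωa' : 0 ≤ ω * ‖a'‖ := by positivity
  have ha : ‖weightCLM a‖ ≤ C * p :=
    (lp.norm_mulOfNormLeOne_le _ _ a).trans (by linarith)
  have ha' : ‖weightCLM a'‖ ≤ C * p / ω := by
    refine (lp.norm_mulOfNormLeOne_le _ _ a').trans ((le_div_iff₀ hω0).2 ?_)
    linarith [norm_nonneg a, mul_comm ω ‖a'‖]
  have hsplit := abs_inner_smul_add_smul_add_sub_le norm_e0R α β (weightCLM a) (weightCLM a')
  rw [← hW, ← hW, add_sub_cancel, add_sub_cancel] at hsplit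
  have hαβ : α * β = ω ^ (-(2 : ℝ) / 3) / 6 := by rw [← hα]; ring
  rw [tsum_dphiF_mul_phiF, ← hαβ]
  calc _ ≤ |α| * ‖weightCLM a'‖ + |β| * ‖weightCLM a‖ + ‖weightCLM a‖ * ‖weightCLM a'‖ := hsplit
    _ ≤ α * (C * p / ω) + β * (C * p) + C * p * (C * p / ω) := by
      rw [abs_of_pos (by positivity), abs_of_pos (by positivity)]
      gcongr
      exact (norm_nonneg _).trans ha
    _ = C * (α * p) / ω + C / 6 * (p * p * ω) / ω + C ^ 2 * (p * p * ω) / ω / ω := by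
      rw [hβ]; field_simp
    _ = (7 * C / 6 + C ^ 2 / ω) / ω * ω ^ (-(2 : ℝ) / 3) := by
      rw [hα, hp]; ring
    _ ≤ (7 * C / 6 + C ^ 2) / ω * ω ^ (-(2 : ℝ) / 3) := by
      gcongr
      exact div_le_self (sq_nonneg C) h1

end SolitonFamily

/-- For `q(ω) = ½‖φ_ω‖²_{l²}` one has `q'(ω) = ⟨∂_ωφ_ω,φ_ω⟩ = Ω(∂_ωφ[θ,ω],∂_θφ[θ,ω])`
and `q'(ω) ∼ ω^{-2/3} > 0` for large `ω` (formula (3.3) of the paper). -/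
theorem qprime_asymptotics {ω₀ C : ℝ} (sf : SolitonFamily ω₀ C) :
    ∃ ω₁ c K : ℝ, ω₀ ≤ ω₁ ∧ 0 < c ∧ c ≤ K ∧
      ∀ ω : ℝ, ω₁ < ω →
        HasDerivAt (fun w => (1 / 2 : ℝ) * ∑' x : ℤ, (sf.phiF w x) ^ 2)
          (∑' x : ℤ, sf.dphiF ω x * sf.phiF ω x) ω ∧
        (∀ θ : ℝ, (∑' x : ℤ, sf.dphiF ω x * sf.phiF ω x)
            = Om (sf.dOmphiC θ ω) (sf.dthphiC θ ω)) ∧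
        c * ω ^ (-(2 : ℝ) / 3) ≤ ∑' x : ℤ, sf.dphiF ω x * sf.phiF ω x ∧
        (∑' x : ℤ, sf.dphiF ω x * sf.phiF ω x) ≤ K * ω ^ (-(2 : ℝ) / 3) := by
  set D := 7 * C / 6 + C ^ 2
  refine ⟨max ω₀ (max 1 (12 * D)), 1 / 12, 1 / 4, le_max_left _ _, by norm_num, by norm_num,
    fun ω hω => ?_⟩
  simp only [max_lt_iff] at hω
  obtain ⟨hω₀, h1, hD⟩ := hω
  have hsmall : D / ω ≤ 1 / 12 := by
    rw [div_le_iff₀ (by linarith)]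
    linarith
  have herr := abs_le.1 <| (sf.abs_tsum_dphiF_mul_phiF_sub_le hω₀ h1.le).trans
    (mul_le_mul_of_nonneg_right hsmall (by positivity))
  refine ⟨sf.hasDerivAt_half_tsum_phiF_sq hω₀, (sf.tsum_dphiF_mul_phiF_eq_Om · ω), ?_, ?_⟩ <;>
    linarith [herr.1, herr.2]

end
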